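/- arXiv:2411.07355 — 2 statements merged into one kernel-verified Lean document; each statement's English description precedes it below -/
import Mathlib

section
/- Let M be a Z_p-module that is derived p-adically complete (equivalently: M is p-adically separated and complete in the derived sense, so that in particular its p-adic Tate module T_p(M) = lim_n M[p^n], with transition maps given by multiplication by p, vanishes). If the p-torsion submodule M[p] is finite, then the full torsion submodule M_tor = ∪_n M[p^n] is finite. -/
/-!
Multiplication by `p` maps `M[p^(n+1)]` to `M[p^n]` with kernel `M[p]`, so every `M[p^n]` is
finite. If the chain `M[p^n]` stabilises at some `k`, the torsion is the finite group `M[p^k]`.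
Otherwise the sets `M[p^(n+1)] \ M[p^n]` of elements of exact order `p^(n+1)` are finite, nonempty
and mapped to each other by multiplication by `p`, so Kőnig's lemma produces a compatible sequence
through them: a nonzero element of `T_p(M)`.
-/

open CategoryTheory in
theorem exists_seq_forall_map_succ_of_finite {α : ℕ → Type*} [∀ n, Finite (α n)]
    [∀ n, Nonempty (α n)] (f : ∀ n, α (n + 1) → α n) :
    ∃ s : ∀ n, α n, ∀ n, f n (s (n + 1)) = s n := by
  let F : ℕᵒᵖ ⥤ Type _ := Functor.ofOpSequence fun n => TypeCat.ofHom (f n)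
  have (j : ℕᵒᵖ) : Finite (F.obj j) := inferInstanceAs (Finite (α j.unop))
  have (j : ℕᵒᵖ) : Nonempty (F.obj j) := inferInstanceAs (Nonempty (α j.unop))
  obtain ⟨u, hu⟩ := nonempty_sections_of_finite_inverse_system F
  refine ⟨fun n => u (.op n), fun n => ?_⟩
  have h := hu (homOfLE (Nat.le_succ n)).op
  rw [Functor.ofOpSequence_map_homOfLE_succ] at h
  exact h

theorem AddMonoidHom.finite_preimage_of_finite_ker {M N : Type*} [AddGroup M] [AddGroup N]
    (f : M →+ N) (hker : (f.ker : Set M).Finite) {s : Set N} (hs : s.Finite) :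
    (f ⁻¹' s).Finite := by
  refine hs.preimage' fun b _ => ?_
  rcases (f ⁻¹' {b}).eq_empty_or_nonempty with h | ⟨x₀, hx₀⟩
  · simp [h]
  · refine (hker.image (x₀ + ·)).subset fun x hx => ⟨-x₀ + x, ?_, by simp⟩
    simp_all

namespace Submodule

variable {R M : Type*} [CommSemiring R]

theorem finite_torsionBy_pow [AddCommGroup M] [Module R M] {r : R}
    (hr : (torsionBy R M r : Set M).Finite) : ∀ n, (torsionBy R M (r ^ n) : Set M).Finite
  | 0 => by simp
  | n + 1 => by
    have hpre : (torsionBy R M (r ^ (n + 1)) : Set M) =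
        DistribSMul.toAddMonoidHom M r ⁻¹' torsionBy R M (r ^ n) := by
      ext x
      simp [pow_succ', mul_smul]
    rw [hpre]
    exact (DistribSMul.toAddMonoidHom M r).finite_preimage_of_finite_ker hr
      (finite_torsionBy_pow hr n)

variable [AddCommMonoid M] [Module R M] {r : R}

theorem torsionBy_pow_le_of_pow_succ_le {k : ℕ}
    (hk : torsionBy R M (r ^ (k + 1)) ≤ torsionBy R M (r ^ k)) :
    ∀ n, torsionBy R M (r ^ n) ≤ torsionBy R M (r ^ k)
  | 0 => by simp
  | n + 1 => fun x hx => hk <| by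
    have hrx : r • x ∈ torsionBy R M (r ^ k) :=
      torsionBy_pow_le_of_pow_succ_le hk n (by simpa [pow_succ, mul_smul] using hx)
    simpa [pow_succ, mul_smul] using hrx

theorem exists_tate_seq_ne_zero (hfin : ∀ n, (torsionBy R M (r ^ n) : Set M).Finite)
    (hgrow : ∀ n, ¬ torsionBy R M (r ^ (n + 1)) ≤ torsionBy R M (r ^ n)) :
    ∃ x : ℕ → M, (∀ n, r ^ n • x n = 0) ∧ (∀ n, r • x (n + 1) = x n) ∧ x 1 ≠ 0 := by
  let α n := ↥((torsionBy R M (r ^ (n + 1)) : Set M) \ torsionBy R M (r ^ n))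
  have (n : ℕ) : Finite (α n) := (hfin (n + 1)).sdiff.to_subtype
  have (n : ℕ) : Nonempty (α n) := by
    obtain ⟨x, hx, hx'⟩ := SetLike.not_le_iff_exists.1 (hgrow n)
    exact ⟨x, hx, hx'⟩
  let f n (x : α (n + 1)) : α n := ⟨r • x.1, by
    simpa only [Set.mem_sdiff, SetLike.mem_coe, mem_torsionBy_iff, smul_smul, ← pow_succ]
      using x.2⟩
  obtain ⟨s, hs⟩ := exists_seq_forall_map_succ_of_finite f
  -- `s n` has exact order `r ^ (n + 1)`, so the shift `r • s n` lands in `M[r ^ n]`.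
  refine ⟨fun n => r • (s n).1, fun n => ?_, fun n => ?_, ?_⟩
  · rw [smul_smul, ← pow_succ]
    exact (s n).2.1
  · exact congrArg (r • ·) (congrArg Subtype.val (hs n))
  · have hs₀ : r • (s 1).1 = s 0 := congrArg Subtype.val (hs 0)
    simpa [hs₀] using (s 0).2.2

end Submodule

open Submodule

/-- Let `M` be a `ℤ_p`-module that is derived `p`-adically complete;
as in the paper, derived completeness (for a module in degree 0) is used through the
vanishing of the `p`-adic Tate module `T_p(M) = lim_n M[p^n]` (transition maps given by
multiplication by `p`), which we take as the hypothesis. If the `p`-torsion submodule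
`M[p]` is finite, then the full torsion submodule `M_tor = ⋃_n M[p^n]` is finite. -/
theorem torsion_finite_of_derived_p_complete
    (p : ℕ) [Fact p.Prime] (M : Type*) [AddCommGroup M] [Module ℤ_[p] M]
    (hTate : ∀ x : ℕ → M, (∀ n, (p : ℤ_[p]) ^ n • x n = 0) →
      (∀ n, (p : ℤ_[p]) • x (n + 1) = x n) → ∀ n, x n = 0)
    (hfin : {x : M | (p : ℤ_[p]) • x = 0}.Finite) :
    {x : M | ∃ n : ℕ, (p : ℤ_[p]) ^ n • x = 0}.Finite := by
  have hM := finite_torsionBy_pow (R := ℤ_[p]) hfin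
  obtain ⟨k, hk⟩ :
      ∃ k, torsionBy ℤ_[p] M ((p : ℤ_[p]) ^ (k + 1)) ≤ torsionBy ℤ_[p] M (p ^ k) := by
    by_contra! hgrow
    obtain ⟨x, hx, hxs, hx₁⟩ := exists_tate_seq_ne_zero hM hgrow
    exact hx₁ (hTate x hx hxs 1)
  refine (hM k).subset ?_
  rintro x ⟨n, hn⟩
  exact torsionBy_pow_le_of_pow_succ_le hk n hn
end

section
/- Let M be a Z_p-module with T_p(M) = 0 (where T_p(M) = lim_n M[p^n] with transition maps given by multiplication by p) and with M[p] finite. Then there exists an integer m ≥ 0 such that the map M[p^{m+1}] → M[p] given by multiplication by p^m is the zero map; consequently M_tor = M[p^m]. -/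
open Set

/-- An antitone sequence of finite sets stabilizes. -/
private lemma antitone_stab' {α : Type*} (T : ℕ → Set α)
    (hT : ∀ k, T (k + 1) ⊆ T k) (hfin : ∀ k, (T k).Finite) :
    ∃ K, ∀ k, K ≤ k → T k = T K := by
  have hanti : Antitone T := antitone_nat_of_succ_le hT
  obtain ⟨K, hK⟩ : ∃ K, (T K).ncard = sInf (Set.range fun k => (T k).ncard) :=
    Nat.sInf_mem (Set.range_nonempty _)
  refine ⟨K, fun k hk => Set.eq_of_subset_of_ncard_le (hanti hk) ?_ (hfin K)⟩
  rw [hK]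
  exact Nat.sInf_le ⟨k, rfl⟩

/-- König's lemma for a sequence of finite nonempty sets linked by a map. -/
private lemma koenig' {α : Type*} (g : α → α) (C : ℕ → Set α)
    (hfin : ∀ n, (C n).Finite) (hne : ∀ n, (C n).Nonempty)
    (hmap : ∀ n x, x ∈ C (n + 1) → g x ∈ C n) :
    ∃ z : ℕ → α, (∀ n, z n ∈ C n) ∧ ∀ n, g (z (n + 1)) = z n := by
  classical
  set S : ℕ → ℕ → Set α := fun n k => g^[k] '' C (n + k) with hS
  have hSsucc : ∀ n k, S n (k + 1) = g '' S (n + 1) k := by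
    intro n k
    have h : n + (k + 1) = (n + 1) + k := by ring
    show g^[k + 1] '' C (n + (k + 1)) = g '' (g^[k] '' C ((n + 1) + k))
    rw [h, Function.iterate_succ', Set.image_comp]
  have hSstep : ∀ n k, S n (k + 1) ⊆ S n k := by
    intro n k x hx
    obtain ⟨y, hy, rfl⟩ := hx
    have h : n + (k + 1) = (n + k) + 1 := by ring
    rw [h] at hy
    refine ⟨g y, hmap _ _ hy, ?_⟩
    rw [← Function.iterate_succ_apply, Function.iterate_succ_apply']
  have hSfin : ∀ n k, (S n k).Finite := fun n k => ((hfin _).image _)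
  have hSne : ∀ n k, (S n k).Nonempty := fun n k => (hne _).image _
  choose K hK using fun n => antitone_stab' (S n) (hSstep n) (hSfin n)
  set D : ℕ → Set α := fun n => S n (K n) with hD
  have hDC : ∀ n, D n ⊆ C n := by
    intro n x hx
    have hanti : Antitone (S n) := antitone_nat_of_succ_le (hSstep n)
    have hx0 : x ∈ S n 0 := hanti (Nat.zero_le _) hx
    simpa [hS] using hx0
  have hDne : ∀ n, (D n).Nonempty := fun n => hSne n (K n)
  have hsurj : ∀ n x, x ∈ D n → ∃ y ∈ D (n + 1), g y = x := by
    intro n x hx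
    set k := max (K (n + 1)) (K n) with hk
    have h1 : S n (k + 1) = S n (K n) :=
      hK n (k + 1) (le_trans (le_max_right _ _) (Nat.le_succ _))
    have h2 : S (n + 1) k = D (n + 1) := hK (n + 1) k (le_max_left _ _)
    have hx' : x ∈ S n (k + 1) := h1 ▸ hx
    rw [hSsucc, h2] at hx'
    obtain ⟨y, hy, hyx⟩ := hx'
    exact ⟨y, hy, hyx⟩
  choose step hstep1 hstep2 using hsurj
  let z : ∀ n : ℕ, {x : α // x ∈ D n} := fun n =>
    Nat.rec ⟨(hDne 0).choose, (hDne 0).choose_spec⟩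
      (fun n prev => ⟨step n prev.1 prev.2, hstep1 n prev.1 prev.2⟩) n
  exact ⟨fun n => (z n).1, fun n => hDC n (z n).2, fun n => hstep2 n (z n).1 (z n).2⟩

/-- Let `M` be a `ℤ_p`-module with vanishing `p`-adic Tate module
`T_p(M) = lim_n M[p^n]` (transition maps given by multiplication by `p`) and with `M[p]`
finite. Then there exists `m ≥ 0` such that the map `M[p^{m+1}] → M[p]`, given by
multiplication by `p^m`, is zero; consequently `M_tor = M[p^m]`. -/
theorem exists_bound_of_tate_vanishing
    (p : ℕ) [Fact p.Prime] (M : Type*) [AddCommGroup M] [Module ℤ_[p] M]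
    (hTate : ∀ x : ℕ → M, (∀ n, (p : ℤ_[p]) ^ n • x n = 0) →
      (∀ n, (p : ℤ_[p]) • x (n + 1) = x n) → ∀ n, x n = 0)
    (hfin : {x : M | (p : ℤ_[p]) • x = 0}.Finite) :
    ∃ m : ℕ,
      (∀ x : M, (p : ℤ_[p]) ^ (m + 1) • x = 0 → (p : ℤ_[p]) ^ m • x = 0) ∧
      {x : M | ∃ n : ℕ, (p : ℤ_[p]) ^ n • x = 0} = {x : M | (p : ℤ_[p]) ^ m • x = 0} := by
  classical
  set q : ℤ_[p] := (p : ℤ_[p]) with hq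
  -- finiteness of fibers of multiplication by p
  have hfib : ∀ y : M, {x : M | q • x = y}.Finite := by
    intro y
    by_cases h : ∃ z : M, q • z = y
    · obtain ⟨z, hz⟩ := h
      have hsub : {x : M | q • x = y} ⊆ (fun w => z + w) '' {x : M | q • x = 0} := by
        intro x hx
        have hx' : q • x = y := hx
        refine ⟨x - z, ?_, by simp⟩
        show q • (x - z) = 0
        rw [smul_sub, hx', hz, sub_self]
      exact (hfin.image _).subset hsub
    · refine Set.Finite.subset Set.finite_empty ?_
      intro x hx
      exact absurd ⟨x, hx⟩ h
  -- each M[p^n] is finite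
  have hfinn : ∀ n : ℕ, {x : M | q ^ n • x = 0}.Finite := by
    intro n
    induction n with
    | zero =>
      have hsub : {x : M | q ^ 0 • x = 0} ⊆ {(0 : M)} := by
        intro x hx; simpa using hx
      exact (Set.finite_singleton _).subset hsub
    | succ n ih =>
      have hsub : {x : M | q ^ (n + 1) • x = 0} ⊆
          ⋃ y ∈ {x : M | q ^ n • x = 0}, {x : M | q • x = y} := by
        intro x hx
        simp only [Set.mem_iUnion, Set.mem_setOf_eq]
        refine ⟨q • x, ?_, rfl⟩
        rw [smul_smul, ← pow_succ]
        exact hx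
      exact ((ih.biUnion fun y _ => hfib y).subset hsub)
  -- the images A n of M[p^(n+1)] inside M[p] stabilize
  set A : ℕ → Set M := fun n => (fun x => q ^ n • x) '' {x : M | q ^ (n + 1) • x = 0} with hA
  have hAstep : ∀ n, A (n + 1) ⊆ A n := by
    intro n x hx
    obtain ⟨y, hy, rfl⟩ := hx
    have hy' : q ^ (n + 1 + 1) • y = 0 := hy
    refine ⟨q • y, ?_, ?_⟩
    · show q ^ (n + 1) • (q • y) = 0
      rw [smul_smul, ← pow_succ]
      exact hy'
    · show q ^ n • (q • y) = q ^ (n + 1) • y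
      rw [smul_smul, ← pow_succ]
  have hAfin : ∀ n, (A n).Finite := fun n => (hfinn (n + 1)).image _
  obtain ⟨m, hm⟩ := antitone_stab' A hAstep hAfin
  have hAanti : Antitone A := antitone_nat_of_succ_le hAstep
  -- key claim: the image A m is {0}
  have key : ∀ x : M, q ^ (m + 1) • x = 0 → q ^ m • x = 0 := by
    intro x hx
    set y : M := q ^ m • x with hy
    have hyA : ∀ n, y ∈ A n := by
      intro n
      rcases le_total m n with h | h
      · rw [hm n h]; exact ⟨x, hx, rfl⟩
      · exact hAanti h ⟨x, hx, rfl⟩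
    set C : ℕ → Set M := fun n => {z : M | q ^ (n + 1) • z = 0 ∧ q ^ n • z = y} with hC
    have hCfin : ∀ n, (C n).Finite := fun n => (hfinn (n + 1)).subset fun z hz => hz.1
    have hCne : ∀ n, (C n).Nonempty := by
      intro n
      obtain ⟨z, hz1, hz2⟩ := hyA n
      exact ⟨z, hz1, hz2⟩
    have hCmap : ∀ n z, z ∈ C (n + 1) → q • z ∈ C n := by
      intro n z hz
      obtain ⟨hz1, hz2⟩ := hz
      constructor
      · show q ^ (n + 1) • (q • z) = 0
        rw [smul_smul, ← pow_succ]
        exact hz1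
      · show q ^ n • (q • z) = y
        rw [smul_smul, ← pow_succ]
        exact hz2
    obtain ⟨z, hzC, hzg⟩ := koenig' (fun w => q • w) C hCfin hCne hCmap
    have h0 : ∀ n, q • z n = 0 := by
      refine hTate (fun n => q • z n) ?_ ?_
      · intro n
        have h1 := (hzC n).1
        show q ^ n • (q • z n) = 0
        rw [smul_smul, ← pow_succ]
        exact h1
      · intro n
        show q • (q • z (n + 1)) = q • z n
        rw [hzg n]
    have hy1 : y = q ^ 1 • z 1 := ((hzC 1).2).symm
    rw [pow_one] at hy1
    rw [hy] at hy1 ⊢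
    rw [hy1, h0 1]
  refine ⟨m, key, ?_⟩
  have down : ∀ k, m ≤ k → ∀ x : M, q ^ (k + 1) • x = 0 → q ^ k • x = 0 := by
    intro k hk x hx
    have h1 : q ^ (m + 1) • (q ^ (k - m) • x) = 0 := by
      rw [smul_smul, ← pow_add]
      have h : m + 1 + (k - m) = k + 1 := by omega
      rw [h]; exact hx
    have h2 := key _ h1
    rw [smul_smul, ← pow_add] at h2
    have h : m + (k - m) = k := by omega
    rwa [h] at h2
  have all : ∀ n (x : M), q ^ n • x = 0 → q ^ m • x = 0 := by
    intro n
    induction n with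
    | zero =>
      intro x hx
      simp only [pow_zero, one_smul] at hx
      rw [hx, smul_zero]
    | succ n ih =>
      intro x hx
      rcases le_or_gt (n + 1) m with h | h
      · have he : m - (n + 1) + (n + 1) = m := by omega
        have heq : q ^ m • x = q ^ (m - (n + 1)) • (q ^ (n + 1) • x) := by
          rw [smul_smul, ← pow_add, he]
        rw [heq, hx, smul_zero]
      · exact ih x (down n (by omega) x hx)
  ext x
  simp only [Set.mem_setOf_eq]
  exact ⟨fun ⟨n, hn⟩ => all n x hn, fun h => ⟨m, h⟩⟩
end
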